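/- Regard 𝓔 as a function of θ with d_ij and d_jk held fixed, and suppose the configuration is isosceles: d_jk = d and d_ki(θ*) = d for some θ* ∈ (0, π) (equivalently cos θ* = d_ij/(2d), requiring 2d > d_ij), with the equilibrium condition H² = I_H(θ*)²/d³. Then d²𝓔/dθ²(θ*) = m_k m_i (m_k(m_i − 3 m_j) d² − 3 m_i m_j d_ij² − 3 I_S)(d_ij sin θ*)²/(I_H(θ*) d³). If moreover m_j ≥ m_i, then this second derivative is strictly negative; hence the Isosceles relative equilibrium configurations are always energetically unstable in the angle θ. -/

import Mathlib

/-!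
With `d_ij` and `d_jk = d` fixed, the angle enters `𝓔` only through `s = d_ki²`: writing
`q(θ) = d_ij² + d² − 2 d_ij d cos θ`, we have `𝓔 = f ∘ q` with
`f(s) = H²/(2(A + m s)) − (B + m/√s)` and `m = m_k m_i`, so `𝓔'' = f''(q) q'² + f'(q) q''`.
The equilibrium condition `H² = I_H²/d³` says exactly that `f'(d²) = 0`, leaving
`𝓔''(θ*) = f''(d²) (2 d_ij d sin θ*)²` with `f''(d²) = m (4 m d² − 3 I_H)/(4 I_H d⁵)`.
Expanding `I_H`, the numerator is `m_k (m_i − 3 m_j) d² − 3 m_i m_j d_ij² − 3 I_S < 0` once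
`m_i ≤ m_j`.
-/

/-- Third side from the law of cosines. -/
noncomputable def dki (dij djk θ : ℝ) : ℝ :=
  Real.sqrt (dij ^ 2 + djk ^ 2 - 2 * dij * djk * Real.cos θ)

/-- Moment of inertia about the rotation axis. -/
noncomputable def IH (mi mj mk IS dij djk θ : ℝ) : ℝ :=
  mi * mj * dij ^ 2 + mj * mk * djk ^ 2 + mk * mi * (dki dij djk θ) ^ 2 + IS

/-- The amended potential `𝓔 = H²/(2 I_H) + U` as a function of
`(d_ij, d_jk, θ)`. -/
noncomputable def amended (mi mj mk IS H dij djk θ : ℝ) : ℝ :=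
  H ^ 2 / (2 * IH mi mj mk IS dij djk θ)
    - (mi * mj / dij + mj * mk / djk + mk * mi / dki dij djk θ)

open Filter Topology

theorem hasDerivAt_deriv_comp {𝕜 : Type*} [NontriviallyNormedField 𝕜] {f g : 𝕜 → 𝕜}
    {x f'' g'' : 𝕜} (hf : ∀ᶠ y in 𝓝 (g x), DifferentiableAt 𝕜 f y)
    (hf' : HasDerivAt (deriv f) f'' (g x)) (hg : ∀ᶠ t in 𝓝 x, DifferentiableAt 𝕜 g t)
    (hg' : HasDerivAt (deriv g) g'' x) :
    HasDerivAt (deriv (f ∘ g)) (f'' * deriv g x ^ 2 + deriv f (g x) * g'') x := by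
  have hgx : HasDerivAt g (deriv g x) x := hg.self_of_nhds.hasDerivAt
  have hderiv : deriv (f ∘ g) =ᶠ[𝓝 x] fun t => deriv f (g t) * deriv g t := by
    filter_upwards [hg, hgx.continuousAt.eventually hf] with t hgt hft
    exact (hft.hasDerivAt.comp t hgt.hasDerivAt).deriv
  refine (((hf'.comp x hgx).mul hg').congr_deriv ?_).congr_of_eventuallyEq hderiv
  simp only [Function.comp_apply]
  ring

noncomputable def cosLawSq (a b θ : ℝ) : ℝ := a ^ 2 + b ^ 2 - 2 * a * b * Real.cos θ

theorem dki_sq (a b θ : ℝ) : dki a b θ ^ 2 = cosLawSq a b θ := by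
  refine Real.sq_sqrt ?_
  nlinarith [Real.sin_sq_add_cos_sq θ, sq_nonneg (a - b * Real.cos θ),
    sq_nonneg (b * Real.sin θ)]

theorem hasDerivAt_cosLawSq (a b θ : ℝ) :
    HasDerivAt (cosLawSq a b) (2 * a * b * Real.sin θ) θ :=
  (((Real.hasDerivAt_cos θ).const_mul (2 * a * b)).const_sub (a ^ 2 + b ^ 2)).congr_deriv
    (by ring)

theorem hasDerivAt_deriv_cosLawSq (a b θ : ℝ) :
    HasDerivAt (deriv (cosLawSq a b)) (2 * a * b * Real.cos θ) θ := by
  rw [funext fun t => (hasDerivAt_cosLawSq a b t).deriv]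
  exact (Real.hasDerivAt_sin θ).const_mul (2 * a * b)

noncomputable def amendedOfSq (m A B H s : ℝ) : ℝ := H ^ 2 / (2 * (A + m * s)) - (B + m / √s)

theorem amended_eq_amendedOfSq_comp (mi mj mk IS H dij d : ℝ) :
    (fun θ => amended mi mj mk IS H dij d θ) =
      amendedOfSq (mk * mi) (mi * mj * dij ^ 2 + mj * mk * d ^ 2 + IS)
        (mi * mj / dij + mj * mk / d) H ∘ cosLawSq dij d := by
  funext θ
  simp only [amended, IH, amendedOfSq, dki_sq, Function.comp_apply, add_right_comm _ _ IS]
  rfl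

section amendedOfSq

variable {m A B H s : ℝ}

theorem hasDerivAt_amendedOfSq (hs : 0 < s) (hI : A + m * s ≠ 0) :
    HasDerivAt (amendedOfSq m A B H)
      (-(H ^ 2 * m) / (2 * (A + m * s) ^ 2) + m / (2 * s * √s)) s := by
  have hI' : HasDerivAt (fun s => 2 * (A + m * s)) (2 * m) s := by
    simpa using ((hasDerivAt_id s).const_mul m |>.const_add A).const_mul 2
  have hsqrt := Real.hasDerivAt_sqrt hs.ne'
  have hsqrt0 : √s ≠ 0 := (Real.sqrt_pos.2 hs).ne'
  refine (((hasDerivAt_const s (H ^ 2)).div hI' (by simpa using hI)).sub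
    ((hasDerivAt_const s B).add ((hasDerivAt_const s m).div hsqrt hsqrt0))).congr_deriv ?_
  -- writing `s = r²` with `r = √s` turns the identity into one between rational functions of `r`
  have hr := Real.sq_sqrt hs.le
  generalize √s = r at *
  subst hr
  field_simp
  ring

theorem eventually_hasDerivAt_amendedOfSq (hs : 0 < s) (hI : A + m * s ≠ 0) :
    ∀ᶠ t in 𝓝 s, HasDerivAt (amendedOfSq m A B H)
      (-(H ^ 2 * m) / (2 * (A + m * t) ^ 2) + m / (2 * t * √t)) t := by
  have hI' : ∀ᶠ t in 𝓝 s, A + m * t ≠ 0 :=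
    (continuous_const.add (continuous_const.mul continuous_id)).continuousAt.eventually_ne hI
  filter_upwards [lt_mem_nhds hs, hI'] with t ht hIt
  exact hasDerivAt_amendedOfSq ht hIt

theorem hasDerivAt_deriv_amendedOfSq (hs : 0 < s) (hI : A + m * s ≠ 0) :
    HasDerivAt (deriv (amendedOfSq m A B H))
      (H ^ 2 * m ^ 2 / (A + m * s) ^ 3 - 3 * m / (4 * s ^ 2 * √s)) s := by
  have hI' : HasDerivAt (fun s => A + m * s) m s := by
    simpa using (hasDerivAt_id s).const_mul m |>.const_add A
  have hsqrt := Real.hasDerivAt_sqrt hs.ne'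
  have hsqrt0 : √s ≠ 0 := (Real.sqrt_pos.2 hs).ne'
  have h := ((hasDerivAt_const s (-(H ^ 2 * m))).div ((hI'.pow 2).const_mul 2)
    (by simpa using hI)).add ((hasDerivAt_const s m).div
      (((hasDerivAt_id s).const_mul 2).mul hsqrt) (by simp [hs.ne', hsqrt0]))
  refine (h.congr_deriv ?_).congr_of_eventuallyEq
    ((eventually_hasDerivAt_amendedOfSq hs hI).mono fun t ht => ht.deriv)
  simp only [Pi.mul_apply, Pi.pow_apply, id]
  have hr := Real.sq_sqrt hs.le
  generalize √s = r at *
  subst hr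
  field_simp
  ring

variable {d : ℝ}

theorem deriv_amendedOfSq_sq_eq_zero (hd : 0 < d) (hI : A + m * d ^ 2 ≠ 0)
    (hH : H ^ 2 = (A + m * d ^ 2) ^ 2 / d ^ 3) :
    deriv (amendedOfSq m A B H) (d ^ 2) = 0 := by
  rw [(hasDerivAt_amendedOfSq (by positivity) hI).deriv, hH, Real.sqrt_sq hd.le]
  field_simp
  ring

theorem hasDerivAt_deriv_amendedOfSq_sq (hd : 0 < d) (hI : A + m * d ^ 2 ≠ 0)
    (hH : H ^ 2 = (A + m * d ^ 2) ^ 2 / d ^ 3) :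
    HasDerivAt (deriv (amendedOfSq m A B H))
      (m * (4 * m * d ^ 2 - 3 * (A + m * d ^ 2)) / (4 * (A + m * d ^ 2) * d ^ 5)) (d ^ 2) := by
  refine (hasDerivAt_deriv_amendedOfSq (by positivity) hI).congr_deriv ?_
  rw [hH, Real.sqrt_sq hd.le]
  field_simp

end amendedOfSq

theorem deriv_deriv_amended_eq (mi mj mk IS H dij d θs : ℝ) (hd : 0 < d)
    (hq : cosLawSq dij d θs = d ^ 2) (hI : IH mi mj mk IS dij d θs ≠ 0)
    (hequil : H ^ 2 = (IH mi mj mk IS dij d θs) ^ 2 / d ^ 3) :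
    deriv (deriv (fun t => amended mi mj mk IS H dij d t)) θs =
      mk * mi * (mk * (mi - 3 * mj) * d ^ 2 - 3 * mi * mj * dij ^ 2 - 3 * IS) *
        (dij * Real.sin θs) ^ 2 / (IH mi mj mk IS dij d θs * d ^ 3) := by
  set A := mi * mj * dij ^ 2 + mj * mk * d ^ 2 + IS
  set f := amendedOfSq (mk * mi) A (mi * mj / dij + mj * mk / d) H
  have hIeq : IH mi mj mk IS dij d θs = A + mk * mi * d ^ 2 := by
    rw [IH, dki_sq, hq]
    ring
  rw [hIeq] at hI hequil ⊢
  have hf : ∀ᶠ y in 𝓝 (cosLawSq dij d θs), DifferentiableAt ℝ f y := by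
    rw [hq]
    exact (eventually_hasDerivAt_amendedOfSq (pow_pos hd 2) hI).mono
      fun _ h => h.differentiableAt
  have hf' : HasDerivAt (deriv f) (mk * mi * (4 * (mk * mi) * d ^ 2 - 3 * (A + mk * mi * d ^ 2)) /
      (4 * (A + mk * mi * d ^ 2) * d ^ 5)) (cosLawSq dij d θs) := by
    rw [hq]
    exact hasDerivAt_deriv_amendedOfSq_sq hd hI hequil
  have hsecond := hasDerivAt_deriv_comp hf hf'
    (.of_forall fun t => (hasDerivAt_cosLawSq dij d t).differentiableAt)
    (hasDerivAt_deriv_cosLawSq dij d θs)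
  rw [amended_eq_amendedOfSq_comp, hsecond.deriv, hq, deriv_amendedOfSq_sq_eq_zero hd hI hequil,
    (hasDerivAt_cosLawSq dij d θs).deriv]
  simp only [A]
  field_simp
  ring

theorem isosceles_second_variation_unstable_general
    (mi mj mk IS H dij d θs : ℝ)
    (hmi : 0 < mi) (hmj : 0 < mj) (hmk : 0 < mk) (hIS : 0 < IS)
    (hdij : 0 < dij) (hd : 0 < d)
    (hθs : θs ∈ Set.Ioo 0 Real.pi) (hcos : Real.cos θs = dij / (2 * d))
    (hequil : H ^ 2 = (IH mi mj mk IS dij d θs) ^ 2 / d ^ 3) :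
    deriv (deriv (fun t => amended mi mj mk IS H dij d t)) θs =
        mk * mi * (mk * (mi - 3 * mj) * d ^ 2 - 3 * mi * mj * dij ^ 2 - 3 * IS) *
          (dij * Real.sin θs) ^ 2 / (IH mi mj mk IS dij d θs * d ^ 3) ∧
      (mi ≤ mj →
        deriv (deriv (fun t => amended mi mj mk IS H dij d t)) θs < 0) := by
  have hq : cosLawSq dij d θs = d ^ 2 := by
    rw [cosLawSq, hcos]
    field_simp
    ring
  have hI : 0 < IH mi mj mk IS dij d θs := by
    rw [IH, dki_sq, hq]
    positivity
  have hformula := deriv_deriv_amended_eq mi mj mk IS H dij d θs hd hq hI.ne' hequil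
  refine ⟨hformula, fun hle => hformula ▸ div_neg_of_neg_of_pos ?_ (by positivity)⟩
  have hsin : 0 < Real.sin θs := Real.sin_pos_of_pos_of_lt_pi hθs.1 hθs.2
  have hnum : mk * (mi - 3 * mj) * d ^ 2 - 3 * mi * mj * dij ^ 2 - 3 * IS < 0 := by
    nlinarith [mul_nonneg (mul_pos hmk (pow_pos hd 2)).le (sub_nonneg.2 hle),
      mul_pos (mul_pos hmk hmj) (pow_pos hd 2), mul_pos (mul_pos hmi hmj) (pow_pos hdij 2)]
  exact mul_neg_of_neg_of_pos (mul_neg_of_pos_of_neg (by positivity) hnum) (by positivity)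

/-- Second variation in `θ` at an Isosceles relative equilibrium
(`d_jk = d_ki(θ*) = d`, i.e. `cos θ* = d_ij/(2d)`, with `H² = I_H(θ*)²/d³`):
`d²𝓔/dθ²(θ*) = m_k m_i (m_k(m_i − 3m_j)d² − 3 m_i m_j d_ij² − 3 I_S)
(d_ij sin θ*)²/(I_H(θ*) d³)`; if moreover `m_j ≥ m_i` then this second
variation is strictly negative, so the Isosceles configurations are
energetically unstable in `θ`. -/
theorem isosceles_second_variation_unstable
    (mi mj mk IS H dij d θs : ℝ)
    (hmi : 0 < mi) (hmj : 0 < mj) (hmk : 0 < mk) (hIS : 0 < IS) (hH : 0 ≤ H)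
    (hdij : 0 < dij) (hd : 0 < d) (hdd : dij < 2 * d)
    (hθs : θs ∈ Set.Ioo 0 Real.pi) (hcos : Real.cos θs = dij / (2 * d))
    (hequil : H ^ 2 = (IH mi mj mk IS dij d θs) ^ 2 / d ^ 3) :
    deriv (deriv (fun t => amended mi mj mk IS H dij d t)) θs =
        mk * mi * (mk * (mi - 3 * mj) * d ^ 2 - 3 * mi * mj * dij ^ 2 - 3 * IS) *
          (dij * Real.sin θs) ^ 2 / (IH mi mj mk IS dij d θs * d ^ 3) ∧
      (mi ≤ mj →
        deriv (deriv (fun t => amended mi mj mk IS H dij d t)) θs < 0) :=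
  isosceles_second_variation_unstable_general mi mj mk IS H dij d θs hmi hmj hmk hIS hdij hd hθs
    hcos hequil
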